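/- For any valid proposal density q (with q(x) > 0 whenever p(x) > 0), the trace of the covariance of the importance sampling estimator satisfies Tr(Σ(q)) ≥ (E_{x~p}[‖f(x)‖₂])² − ‖μ‖₂², where μ = E_{p}[f(x)]. -/
import Mathlib


open MeasureTheory

/-- lower bound on the trace of the covariance for any valid proposal. -/
theorem trace_covariance_lower_bound
    (d1 d2 : ℕ)
    (p q : EuclideanSpace ℝ (Fin d1) → ℝ)
    (f : EuclideanSpace ℝ (Fin d1) → EuclideanSpace ℝ (Fin d2))
    (hp : ∀ x, 0 ≤ p x) (hq : ∀ x, 0 ≤ q x)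
    (hpdf : ∫ x, p x = 1) (hqdf : ∫ x, q x = 1)
    (habs : ∀ x, 0 < p x → 0 < q x)
    (μ : EuclideanSpace ℝ (Fin d2))
    (hμ : μ = ∫ x, p x • f x)
    (hintf : Integrable (fun x => p x • f x))
    (hintnf : Integrable (fun x => p x * ‖f x‖))
    (hintq2 : Integrable (fun x => q x * ‖(p x / q x) • f x‖ ^ 2)) :
    (∫ x, p x * ‖f x‖) ^ 2 - ‖μ‖ ^ 2
      ≤ (∫ x, q x * ‖(p x / q x) • f x‖ ^ 2) - ‖μ‖ ^ 2 := by
  apply sub_le_sub_right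
  set X : EuclideanSpace ℝ (Fin d1) → ℝ := fun x => (p x / q x) * ‖f x‖ with hX
  have hXeq : ∀ x, ‖(p x / q x) • f x‖ = X x := by
    intro x
    rw [norm_smul, Real.norm_eq_abs, abs_of_nonneg (div_nonneg (hp x) (hq x))]
  have hXsq : ∀ x, ‖(p x / q x) • f x‖ ^ 2 = X x ^ 2 := fun x => by rw [hXeq]
  have hqX : ∀ x, q x * X x = p x * ‖f x‖ := by
    intro x
    by_cases h : q x = 0
    · have hp0 : p x = 0 := by
        by_contra h'
        have := habs x (lt_of_le_of_ne (hp x) (Ne.symm h'))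
        rw [h] at this
        exact lt_irrefl 0 this
      simp [h, hp0, hX]
    · simp only [hX]
      field_simp
  have hqint : Integrable q := by
    by_contra h
    rw [integral_undef h] at hqdf
    norm_num at hqdf
  set m := ∫ x, p x * ‖f x‖ with hm
  have hint2 : Integrable (fun x => q x * X x ^ 2) := by
    refine hintq2.congr ?_
    filter_upwards with x
    rw [hXsq]
  have expand : ∀ x, q x * (X x - m) ^ 2
      = q x * X x ^ 2 - 2 * m * (p x * ‖f x‖) + m ^ 2 * q x := by
    intro x
    rw [← hqX]
    ring
  have key : 0 ≤ ∫ x, q x * (X x - m) ^ 2 :=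
    integral_nonneg fun x => mul_nonneg (hq x) (sq_nonneg _)
  have hval : (∫ x, q x * (X x - m) ^ 2)
      = (∫ x, q x * X x ^ 2) - m ^ 2 := by
    simp_rw [expand]
    have h1 : (∫ x, (q x * X x ^ 2 - 2 * m * (p x * ‖f x‖) + m ^ 2 * q x))
        = (∫ x, (q x * X x ^ 2 - 2 * m * (p x * ‖f x‖))) + ∫ x, m ^ 2 * q x :=
      integral_add (by exact hint2.sub (hintnf.const_mul (2 * m)))
        (hqint.const_mul (m ^ 2))
    have h2 : (∫ x, (q x * X x ^ 2 - 2 * m * (p x * ‖f x‖)))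
        = (∫ x, q x * X x ^ 2) - ∫ x, 2 * m * (p x * ‖f x‖) :=
      integral_sub hint2 (hintnf.const_mul (2 * m))
    rw [h1, h2, integral_const_mul, integral_const_mul, hqdf, ← hm]
    ring
  have : m ^ 2 ≤ ∫ x, q x * X x ^ 2 := by linarith [key, hval.symm ▸ key, hval ▸ key]
  calc m ^ 2 ≤ ∫ x, q x * X x ^ 2 := this
    _ = ∫ x, q x * ‖(p x / q x) • f x‖ ^ 2 := by simp_rw [hXsq]
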